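/- Let N : Fin 6 → ℤ be nonnegative with N 0 = N 5, N 1 = N 4, N 2 = N 3, ∑ N i = 4, some consecutive pair nonzero, and suppose there is an integer x (playing the role of ∫ c₁c₂²) with 1440 * (N 0) = -(∑_{i=0}^{5} N i * (6*i*(i-1) - 25)) + 3 * x. Then a contradiction follows; i.e., no such N and x exist. -/
import Mathlib

/-- Full arithmetic of the proof of Theorem 1.2: no such N and x exist. -/
theorem stmt_7 (N : Fin 6 → ℤ) (hpos : ∀ i, 0 ≤ N i)
    (h05 : N 0 = N 5) (h14 : N 1 = N 4) (h23 : N 2 = N 3)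
    (hsum : ∑ i, N i = 4)
    (hcons : ∃ i : Fin 5, N i.castSucc ≠ 0 ∧ N i.succ ≠ 0)
    (x : ℤ)
    (hx : 1440 * N 0 = -(∑ i : Fin 6, N i * (6 * (i : ℤ) * ((i : ℤ) - 1) - 25)) + 3 * x) :
    False := by
  simp [Fin.sum_univ_six] at hsum hx
  omega
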